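/- arXiv:2408.15071 — 6 statements merged into one kernel-verified Lean document; each statement's English description precedes it below -/
import Mathlib

section
/- Let g be an ε-upper gradient of u for some ε > 0, and suppose g is upper semicontinuous. Then lip u(x) ≤ g(x) for every x ∈ X, where lip u(x) = limsup_{y→x} |u(y)−u(x)|/d(y,x) is the local Lipschitz constant. -/
open scoped ENNReal

variable {X : Type*} [MetricSpace X]

/-- `q 0, …, q N` is an `ε`-chain: consecutive points at distance at most `ε`. -/
def IsEpsChain (ε : ℝ) (N : ℕ) (q : ℕ → X) : Prop :=
  ∀ i < N, dist (q i) (q (i + 1)) ≤ ε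

/-- The chain integral `∫_c g = Σ (g(q_i)+g(q_{i+1}))/2 · d(q_i,q_{i+1})`. -/
noncomputable def chainInt (g : X → ℝ≥0∞) (N : ℕ) (q : ℕ → X) : ℝ≥0∞ :=
  ∑ i ∈ Finset.range N,
    (g (q i) + g (q (i + 1))) / 2 * ENNReal.ofReal (dist (q i) (q (i + 1)))

/-- `g` is an `ε`-upper gradient of `u`: the upper gradient inequality holds along
every `ε`-chain. -/
def IsEpsUpperGradient (ε : ℝ) (u : X → ℝ) (g : X → ℝ≥0∞) : Prop :=
  ∀ (N : ℕ) (q : ℕ → X), IsEpsChain ε N q →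
    ENNReal.ofReal |u (q N) - u (q 0)| ≤ chainInt g N q

/-- The slope of `u` at scale `ε`:
`sl_ε u (x) = sup_{y ∈ B_ε(x), y ≠ x} |u y - u x| / d(y,x)`. -/
noncomputable def epsSlope (ε : ℝ) (u : X → ℝ) (x : X) : ℝ≥0∞ :=
  ⨆ (y : X) (_ : y ∈ Metric.ball x ε ∧ y ≠ x), ENNReal.ofReal (|u y - u x| / dist y x)

/-- The local Lipschitz constant `lip u (x) = lim_{ε→0} sl_ε u (x) = inf_{ε>0} sl_ε u (x)`. -/
noncomputable def lipConst (u : X → ℝ) (x : X) : ℝ≥0∞ :=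
  ⨅ (ε : ℝ) (_ : 0 < ε), epsSlope ε u x

/-- If `g` is an upper semicontinuous `ε`-upper gradient of `u` for some `ε > 0`,
then `lip u ≤ g` everywhere. -/
theorem lipConst_le_of_upperSemicontinuous (ε : ℝ) (hε : 0 < ε) (u : X → ℝ)
    (g : X → ℝ≥0∞) (hg : UpperSemicontinuous g) (hug : IsEpsUpperGradient ε u g) :
    ∀ x : X, lipConst u x ≤ g x := by
  intro x
  refine le_of_forall_gt_imp_ge_of_dense fun c hc => ?_
  obtain ⟨δ, hδ, hball⟩ : ∃ δ > 0, ∀ y ∈ Metric.ball x δ, g y < c := by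
    have h := hg x c hc
    rw [Metric.eventually_nhds_iff_ball] at h
    obtain ⟨δ, hδ, h⟩ := h
    exact ⟨δ, hδ, h⟩
  have hδ' : 0 < min δ ε := lt_min hδ hε
  refine le_trans (iInf₂_le (min δ ε) hδ') (iSup₂_le fun y hy => ?_)
  obtain ⟨hyb, hyx⟩ := hy
  have hd : 0 < dist y x := dist_pos.2 hyx
  set q : ℕ → X := fun i => if i = 0 then x else y with hq
  have hchain : IsEpsChain ε 1 q := by
    intro i hi
    interval_cases i
    simp only [hq, if_pos rfl, if_neg one_ne_zero]
    rw [dist_comm]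
    exact le_of_lt (lt_of_lt_of_le hyb (min_le_right _ _))
  have key := hug 1 q hchain
  simp only [chainInt, Finset.sum_range_one, hq, if_pos rfl, if_neg one_ne_zero] at key
  have hgx : g x < c := hball x (Metric.mem_ball_self hδ)
  have hgy : g y < c := hball y (Metric.ball_subset_ball (min_le_left δ ε) hyb)
  have hcoef : (g x + g y) / 2 ≤ c := by
    calc (g x + g y) / 2 ≤ (c + c) / 2 := by gcongr
    _ = c := by rw [ENNReal.add_div, ENNReal.add_halves]
  have key2 : ENNReal.ofReal |u y - u x| ≤ c * ENNReal.ofReal (dist y x) := by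
    calc ENNReal.ofReal |u y - u x| ≤ (g x + g y) / 2 * ENNReal.ofReal (dist x y) := key
    _ ≤ c * ENNReal.ofReal (dist y x) := by rw [dist_comm]; gcongr
  rw [ENNReal.ofReal_div_of_pos hd]
  exact ENNReal.div_le_of_le_mul key2
end

section
/- Let (X,d) be a metric space and g an ε-upper gradient of u : X → ℝ for some ε > 0. Then for every rectifiable curve γ whose endpoints x = α(γ) and y = ω(γ) satisfy g(x) < ∞ and g(y) < ∞, the upper gradient inequality |u(y) − u(x)| ≤ ∫_γ g holds, where ∫_γ g is the line integral of g over the arc-length parametrization of γ. -/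
open scoped ENNReal

variable {X : Type*} [MetricSpace X]

open MeasureTheory

private lemma sum_lintegral_Ico' (f : ℝ → ℝ≥0∞) (μ : Measure ℝ) (a s : ℝ) (hs : 0 ≤ s) :
    ∀ m : ℕ, ∑ j ∈ Finset.range m, ∫⁻ t in Set.Ico (a + j * s) (a + (j + 1) * s), f t ∂μ
      = ∫⁻ t in Set.Ico a (a + m * s), f t ∂μ := by
  intro m
  induction m with
  | zero => simp
  | succ m ih =>
    rw [Finset.sum_range_succ, ih]
    have h1 : a ≤ a + m * s := by nlinarith [Nat.cast_nonneg (α := ℝ) m]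
    have h2 : a + m * s ≤ a + (m + 1 : ℝ) * s := by nlinarith
    rw [← lintegral_union measurableSet_Ico (Set.Ico_disjoint_Ico_same),
      Set.Ico_union_Ico_eq_Ico h1 h2]
    push_cast
    ring_nf

private lemma exists_le_div_of_sum_le' {M : ℕ} (hM : M ≠ 0) {C : ℕ → ℝ≥0∞} {A : ℝ≥0∞}
    (h : ∑ k ∈ Finset.range M, C k ≤ A) : ∃ k < M, C k ≤ A / M := by
  obtain ⟨k, hk, hmin⟩ := Finset.exists_min_image (Finset.range M) C
    ⟨0, Finset.mem_range.mpr (Nat.pos_of_ne_zero hM)⟩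
  refine ⟨k, Finset.mem_range.mp hk, ?_⟩
  rw [ENNReal.le_div_iff_mul_le (Or.inl (Nat.cast_ne_zero.mpr hM))
    (Or.inl (ENNReal.natCast_ne_top M))]
  calc C k * M = ∑ _ ∈ Finset.range M, C k := by
        rw [Finset.sum_const, Finset.card_range, nsmul_eq_mul, mul_comm]
    _ ≤ ∑ k ∈ Finset.range M, C k := Finset.sum_le_sum fun i hi => hmin i hi
    _ ≤ A := h

private lemma exists_point_lt_avg' {f f' : ℝ → ℝ≥0∞} {μ : Measure ℝ}
    (hf'm : Measurable f') (hle : ∀ t, f' t ≤ f t)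
    (heq : ∫⁻ t, f t ∂μ = ∫⁻ t, f' t ∂μ) (hA : ∫⁻ t, f t ∂μ ≠ ∞)
    {J : Set ℝ} (hJ : MeasurableSet J) (h0 : μ J ≠ 0) (hfin : μ J ≠ ∞)
    {δ : ℝ≥0∞} (hδ : δ ≠ 0) :
    ∃ t ∈ J, f t < (∫⁻ t in J, f' t ∂μ) / μ J + δ := by
  set c := ∫⁻ t in J, f' t ∂μ with hc
  set v := μ J with hv
  set b := c / v with hb
  have hf'A : ∫⁻ t, f' t ∂μ ≠ ∞ := heq ▸ hA
  have hcfin : c ≠ ∞ := fun htop => hf'A (top_le_iff.mp (htop ▸ setLIntegral_le_lintegral J f'))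
  have hδ2 : δ / 2 ≠ 0 := by simpa using hδ
  set S := J ∩ {t | f' t < b + δ / 2} with hS
  have hSm : MeasurableSet S := hJ.inter (hf'm measurableSet_Iio)
  have hSpos : μ S ≠ 0 := by
    intro hS0
    have hae : ∀ᵐ t ∂μ.restrict J, b + δ / 2 ≤ f' t := by
      rw [ae_restrict_iff' hJ]
      rw [ae_iff]
      refine measure_mono_null ?_ hS0
      intro t ht
      simp only [Set.mem_setOf_eq, _root_.not_imp, not_le] at ht
      exact ⟨ht.1, ht.2⟩
    have hge : (b + δ / 2) * v ≤ c := by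
      calc (b + δ / 2) * v = ∫⁻ _ in J, (b + δ / 2) ∂μ := (setLIntegral_const J _).symm
        _ ≤ ∫⁻ t in J, f' t ∂μ := lintegral_mono_ae hae
    have hbv : b * v = c := ENNReal.div_mul_cancel h0 hfin
    have hcc : c + δ / 2 * v ≤ c := by
      calc c + δ / 2 * v = (b + δ / 2) * v := by rw [add_mul, hbv]
        _ ≤ c := hge
    exact absurd hcc (not_le.mpr (ENNReal.lt_add_right hcfin (mul_ne_zero hδ2 h0)))
  by_contra hcon
  push_neg at hcon
  have hptwise : ∀ t, f' t + S.indicator (fun _ => δ / 2) t ≤ f t := by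
    intro t
    by_cases ht : t ∈ S
    · rw [Set.indicator_of_mem ht]
      have h1 : b + δ / 2 + δ / 2 ≤ f t := by
        have h2 := hcon t ht.1
        calc b + δ / 2 + δ / 2 = b + δ := by rw [add_assoc, ENNReal.add_halves]
          _ ≤ f t := h2
      calc f' t + δ / 2 ≤ b + δ / 2 + δ / 2 := add_le_add_left (le_of_lt ht.2) _
        _ ≤ f t := h1
    · rw [Set.indicator_of_notMem ht, add_zero]; exact hle t
  have hint : ∫⁻ t, (f' t + S.indicator (fun _ => δ / 2) t) ∂μ
      = ∫⁻ t, f' t ∂μ + δ / 2 * μ S := by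
    rw [lintegral_add_left hf'm, lintegral_indicator_const hSm]
  have hle2 : ∫⁻ t, f' t ∂μ + δ / 2 * μ S ≤ ∫⁻ t, f' t ∂μ := by
    rw [← hint, ← heq]
    exact lintegral_mono hptwise
  exact absurd hle2 (not_le.mpr (ENNReal.lt_add_right hf'A (mul_ne_zero hδ2 hSpos)))

private lemma lip_of_arc' {L : ℝ} {γ : ℝ → X}
    (harc : ∀ t ∈ Set.Icc (0 : ℝ) L, eVariationOn γ (Set.Icc 0 t) = ENNReal.ofReal t)
    {s t : ℝ} (h0 : 0 ≤ s) (hst : s ≤ t) (htL : t ≤ L) : dist (γ s) (γ t) ≤ t - s := by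
  have h1 := eVariationOn.Icc_add_Icc γ (s := Set.univ) h0 hst (Set.mem_univ s)
  simp only [Set.univ_inter] at h1
  rw [harc s ⟨h0, hst.trans htL⟩, harc t ⟨h0.trans hst, htL⟩] at h1
  have h3 : ENNReal.ofReal t = ENNReal.ofReal s + ENNReal.ofReal (t - s) := by
    rw [← ENNReal.ofReal_add h0 (sub_nonneg.mpr hst)]
    ring_nf
  have h4 : eVariationOn γ (Set.Icc s t) = ENNReal.ofReal (t - s) :=
    (ENNReal.add_right_inj ENNReal.ofReal_ne_top).mp (h1.trans h3)
  have h5 := eVariationOn.edist_le γ (s := Set.Icc s t) (x := s) (y := t)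
    (Set.mem_Icc.mpr ⟨le_refl s, hst⟩) (Set.mem_Icc.mpr ⟨hst, le_refl t⟩)
  rw [h4, edist_dist] at h5
  exact (ENNReal.ofReal_le_ofReal_iff (sub_nonneg.mpr hst)).mp h5

set_option maxHeartbeats 1000000 in
/-- An `ε`-upper gradient of `u` satisfies the upper gradient inequality along
every rectifiable curve (here parametrized by arc length on `[0, L]`, i.e.
`ℓ(γ|_{[0,t]}) = t` for all `t ∈ [0, L]`) whose endpoints lie in `{g < ∞}`. -/
theorem epsUpperGradient_along_curve (ε : ℝ) (hε : 0 < ε) (u : X → ℝ)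
    (g : X → ℝ≥0∞) (hug : IsEpsUpperGradient ε u g)
    (L : ℝ) (hL : 0 ≤ L) (γ : ℝ → X)
    (harc : ∀ t ∈ Set.Icc (0 : ℝ) L, eVariationOn γ (Set.Icc 0 t) = ENNReal.ofReal t)
    (hx : g (γ 0) < ∞) (hy : g (γ L) < ∞) :
    ENNReal.ofReal |u (γ L) - u (γ 0)| ≤ ∫⁻ t in Set.Icc (0 : ℝ) L, g (γ t) := by
  rcases hL.eq_or_lt with hL0 | hLpos
  · rw [← hL0]; simp
  set μ : Measure ℝ := volume.restrict (Set.Icc (0:ℝ) L) with hμ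
  set f : ℝ → ℝ≥0∞ := fun t => g (γ t) with hfdef
  show ENNReal.ofReal |u (γ L) - u (γ 0)| ≤ ∫⁻ t, f t ∂μ
  by_cases hAtop : ∫⁻ t, f t ∂μ = ∞
  · rw [hAtop]; exact le_top
  set A := ∫⁻ t, f t ∂μ with hA
  obtain ⟨f', hf'm, hf'le, hf'eq⟩ := exists_measurable_le_lintegral_eq μ f
  refine ENNReal.le_of_forall_pos_le_add fun η hη _ => ?_
  have hηr : (0:ℝ) < (η:ℝ) := hη
  set ηr : ℝ := (η : ℝ) with hηrdef
  set G := g (γ 0) + g (γ L) with hGdef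
  have hG : G ≠ ∞ := ENNReal.add_ne_top.mpr ⟨hx.ne, hy.ne⟩
  obtain ⟨n, hn⟩ := exists_nat_gt (max (2*L/ε) (6*L*G.toReal/ηr))
  have hnpos : (0:ℝ) < n := lt_of_le_of_lt (le_trans (by positivity) (le_max_left (2*L/ε) _)) hn
  have hn0 : n ≠ 0 := by exact_mod_cast hnpos.ne'
  obtain ⟨M, hM⟩ := exists_nat_gt (max (3*A.toReal/ηr) 0)
  have hMpos : (0:ℝ) < M := lt_of_le_of_lt (le_max_right _ 0) hM
  have hMn0 : M ≠ 0 := by exact_mod_cast hMpos.ne'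
  set Δ : ℝ := L / n with hΔdef
  set s : ℝ := Δ / M with hsdef
  have hΔpos : 0 < Δ := by positivity
  have hspos : 0 < s := by positivity
  have hMs : (M:ℝ) * s = Δ := by rw [hsdef]; field_simp [hMpos.ne']
  have hnΔ : (n:ℝ) * Δ = L := by rw [hΔdef]; field_simp [hnpos.ne']
  have hM1 : (1:ℝ) ≤ M := by exact_mod_cast Nat.one_le_iff_ne_zero.mpr hMn0
  have hsΔ : s ≤ Δ := by nlinarith
  have hΔε : 2*Δ ≤ ε := by
    have h2 := lt_of_le_of_lt (le_max_left (2*L/ε) (6*L*G.toReal/ηr)) hn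
    have h3 : 2*L < n * ε := (div_lt_iff₀ hε).mp h2
    by_contra hcon
    push_neg at hcon
    have h4 : (n:ℝ)*ε < n*(2*Δ) := by nlinarith
    nlinarith
  set δ : ℝ := (ηr/3)/(2*L+1) with hδdef
  have hδpos : 0 < δ := by positivity
  -- the fine sliver integrals
  set c : ℕ → ℕ → ℝ≥0∞ := fun i k =>
    ∫⁻ x in Set.Ico ((i:ℝ)*Δ + (k:ℝ)*s) ((i:ℝ)*Δ + ((k:ℝ)+1)*s), f' x ∂μ with hcdef
  have hsum : ∑ k ∈ Finset.range M, ∑ i ∈ Finset.range n, c i k ≤ A := by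
    rw [Finset.sum_comm]
    have hinner : ∀ i ∈ Finset.range n, ∑ k ∈ Finset.range M, c i k
        = ∫⁻ x in Set.Ico (0 + (i:ℝ)*Δ) (0 + ((i:ℝ)+1)*Δ), f' x ∂μ := by
      intro i _
      rw [show (∑ k ∈ Finset.range M, c i k)
          = ∑ k ∈ Finset.range M, ∫⁻ x in Set.Ico ((i:ℝ)*Δ + (k:ℝ)*s) ((i:ℝ)*Δ + ((k:ℝ)+1)*s), f' x ∂μ from rfl,
        sum_lintegral_Ico' f' μ ((i:ℝ)*Δ) s hspos.le M]
      have h1 : (0:ℝ) + (i:ℝ)*Δ = (i:ℝ)*Δ := by ring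
      have h2 : (0:ℝ) + ((i:ℝ)+1)*Δ = (i:ℝ)*Δ + (M:ℝ)*s := by rw [hMs]; ring
      rw [h1, h2]
    rw [Finset.sum_congr rfl hinner, sum_lintegral_Ico' f' μ 0 Δ hΔpos.le n]
    calc ∫⁻ x in Set.Ico 0 (0 + n*Δ), f' x ∂μ ≤ ∫⁻ x, f' x ∂μ :=
          setLIntegral_le_lintegral _ _
      _ = A := hf'eq.symm
  obtain ⟨k, hkM, hCk⟩ := exists_le_div_of_sum_le' hMn0 hsum
  have hk1 : ((k:ℝ)+1)*s ≤ Δ := by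
    have hkM' : ((k:ℝ)+1) ≤ M := by exact_mod_cast hkM
    nlinarith
  have hJsub : ∀ i < n, Set.Ico ((i:ℝ)*Δ + (k:ℝ)*s) ((i:ℝ)*Δ + ((k:ℝ)+1)*s) ⊆ Set.Icc 0 L := by
    intro i hi x hx
    have hin1 : ((i:ℝ)+1) ≤ n := by exact_mod_cast hi
    have hi0 : (0:ℝ) ≤ i := Nat.cast_nonneg i
    have hk0 : (0:ℝ) ≤ (k:ℝ)*s := by positivity
    obtain ⟨hx1, hx2⟩ := hx
    constructor
    · nlinarith
    · nlinarith
  have hμJ : ∀ i < n, μ (Set.Ico ((i:ℝ)*Δ + (k:ℝ)*s) ((i:ℝ)*Δ + ((k:ℝ)+1)*s))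
      = ENNReal.ofReal s := by
    intro i hi
    rw [hμ, Measure.restrict_apply measurableSet_Ico,
      Set.inter_eq_self_of_subset_left (hJsub i hi), Real.volume_Ico]
    congr 1
    ring
  -- select good points
  have hsel : ∀ i : ℕ, ∃ x : ℝ, (0 ≤ x ∧ x ≤ L) ∧ (i < n →
      ((i:ℝ)*Δ + (k:ℝ)*s ≤ x ∧ x < (i:ℝ)*Δ + ((k:ℝ)+1)*s) ∧
      f x < c i k / ENNReal.ofReal s + ENNReal.ofReal δ) := by
    intro i
    by_cases hi : i < n
    · obtain ⟨x, hxJ, hxf⟩ := exists_point_lt_avg' hf'm (fun t => hf'le t) hf'eq hAtop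
        measurableSet_Ico
        (by rw [hμJ i hi]; simp [ENNReal.ofReal_eq_zero, not_le, hspos])
        (by rw [hμJ i hi]; exact ENNReal.ofReal_ne_top)
        (δ := ENNReal.ofReal δ) (by simp [ENNReal.ofReal_eq_zero, not_le, hδpos])
      rw [hμJ i hi] at hxf
      have hxIcc := hJsub i hi hxJ
      exact ⟨x, ⟨hxIcc.1, hxIcc.2⟩, fun _ => ⟨Set.mem_Ico.mp hxJ, hxf⟩⟩
    · exact ⟨0, ⟨le_refl 0, hL⟩, fun h => absurd h hi⟩
  choose t htmem htsel using hsel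
  -- the chain of times
  set T : ℕ → ℝ := fun j => match j with
    | 0 => 0
    | j+1 => if j < n then t j else L with hTdef
  have hT0 : T 0 = 0 := rfl
  have hTmid : ∀ i < n, T (i+1) = t i := fun i hi => if_pos hi
  have hTlast : T (n+1) = L := if_neg (lt_irrefl n)
  have hTrange : ∀ j, 0 ≤ T j ∧ T j ≤ L := by
    intro j
    match j with
    | 0 => exact ⟨le_refl 0, hL⟩
    | j+1 =>
      by_cases hj : j < n
      · rw [hTmid j hj]; exact htmem j
      · rw [show T (j+1) = L from if_neg hj]; exact ⟨hL, le_refl L⟩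
  have hgap : ∀ j < n+1, T j ≤ T (j+1) ∧ T (j+1) - T j ≤ Δ + s := by
    intro j hj
    have hks0 : (0:ℝ) ≤ (k:ℝ)*s := by positivity
    match j with
    | 0 =>
      rw [hT0, hTmid 0 (by omega)]
      have h1 := (htsel 0 (by omega)).1
      push_cast at h1
      constructor
      · linarith [(htmem 0).1]
      · nlinarith [h1.1, h1.2]
    | m+1 =>
      have hmn : m < n := by omega
      rw [hTmid m hmn]
      have h1 := (htsel m hmn).1
      by_cases hm1 : m+1 < n
      · rw [hTmid (m+1) hm1]
        have h2 := (htsel (m+1) hm1).1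
        push_cast at h1 h2
        constructor
        · nlinarith [h1.2, h2.1]
        · nlinarith [h1.1, h2.2]
      · have hmeq : m+1 = n := by omega
        rw [show T (m+1+1) = L from if_neg hm1]
        have hcast : ((m:ℝ)+1) = (n:ℝ) := by exact_mod_cast congrArg (Nat.cast (R := ℝ)) hmeq
        constructor
        · nlinarith [h1.2]
        · nlinarith [h1.1]
  -- the ε-chain
  have hchain : IsEpsChain ε (n+1) (γ ∘ T) := by
    intro j hj
    have h1 := hgap j hj
    have h2 := hTrange j
    have h3 := hTrange (j+1)
    have hd : dist (γ (T j)) (γ (T (j+1))) ≤ T (j+1) - T j :=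
      lip_of_arc' harc h2.1 h1.1 h3.2
    calc dist ((γ ∘ T) j) ((γ ∘ T) (j+1)) ≤ T (j+1) - T j := hd
      _ ≤ Δ + s := h1.2
      _ ≤ ε := by linarith
  have hkey := hug (n+1) (γ ∘ T) hchain
  have hcomp0 : (γ ∘ T) 0 = γ 0 := by simp [hT0]
  have hcompL : (γ ∘ T) (n+1) = γ L := by simp [Function.comp_apply, hTlast]
  rw [hcomp0, hcompL] at hkey
  refine le_trans hkey ?_
  -- bound the chain integral
  have hdist : ∀ j < n+1, dist (γ (T j)) (γ (T (j+1))) ≤ Δ + s := by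
    intro j hj
    have h1 := hgap j hj
    have h2 := hTrange j
    have h3 := hTrange (j+1)
    exact le_trans (lip_of_arc' harc h2.1 h1.1 h3.2) h1.2
  have step1 : chainInt g (n+1) (γ ∘ T)
      ≤ (∑ j ∈ Finset.range (n+1), (f (T j) + f (T (j+1))) / 2) * ENNReal.ofReal (Δ + s) := by
    rw [Finset.sum_mul]
    refine Finset.sum_le_sum fun j hj => ?_
    exact mul_le_mul_right (ENNReal.ofReal_le_ofReal (hdist j (Finset.mem_range.mp hj))) _
  have step3 : ∑ j ∈ Finset.range (n+1), (f (T j) + f (T (j+1))) / 2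
      ≤ ∑ j ∈ Finset.range (n+2), f (T j) := by
    have e1 : ∑ j ∈ Finset.range (n+1), (f (T j) + f (T (j+1))) / 2
        = (∑ j ∈ Finset.range (n+1), f (T j)) / 2
          + (∑ j ∈ Finset.range (n+1), f (T (j+1))) / 2 := by
      simp only [div_eq_mul_inv, add_mul]
      rw [Finset.sum_add_distrib, ← Finset.sum_mul, ← Finset.sum_mul]
    have e2 : ∑ j ∈ Finset.range (n+1), f (T j) ≤ ∑ j ∈ Finset.range (n+2), f (T j) :=
      Finset.sum_le_sum_of_subset (Finset.range_subset_range.mpr (by omega))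
    have e3 : ∑ j ∈ Finset.range (n+1), f (T (j+1)) ≤ ∑ j ∈ Finset.range (n+2), f (T j) := by
      rw [Finset.sum_range_succ' (fun j => f (T j)) (n+1)]
      exact le_add_right (le_refl _)
    calc ∑ j ∈ Finset.range (n+1), (f (T j) + f (T (j+1))) / 2
        = (∑ j ∈ Finset.range (n+1), f (T j)) / 2
          + (∑ j ∈ Finset.range (n+1), f (T (j+1))) / 2 := e1
      _ ≤ (∑ j ∈ Finset.range (n+2), f (T j)) / 2
          + (∑ j ∈ Finset.range (n+2), f (T j)) / 2 :=
            add_le_add (ENNReal.div_le_div_right e2 2) (ENNReal.div_le_div_right e3 2)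
      _ = ∑ j ∈ Finset.range (n+2), f (T j) := ENNReal.add_halves _
  have step4 : ∑ j ∈ Finset.range (n+2), f (T j)
      ≤ G + ((A/M) / ENNReal.ofReal s + (n:ℝ≥0∞) * ENNReal.ofReal δ) := by
    rw [Finset.sum_range_succ' (fun j => f (T j)) (n+1), Finset.sum_range_succ]
    have hmidle : ∑ j ∈ Finset.range n, f (T (j+1))
        ≤ (A/M) / ENNReal.ofReal s + (n:ℝ≥0∞) * ENNReal.ofReal δ := by
      have hb : ∀ j ∈ Finset.range n, f (T (j+1))
          ≤ c j k / ENNReal.ofReal s + ENNReal.ofReal δ := by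
        intro j hj
        have hjlt := Finset.mem_range.mp hj
        rw [hTmid j hjlt]
        exact ((htsel j hjlt).2).le
      calc ∑ j ∈ Finset.range n, f (T (j+1))
          ≤ ∑ j ∈ Finset.range n, (c j k / ENNReal.ofReal s + ENNReal.ofReal δ) :=
            Finset.sum_le_sum hb
        _ = (∑ j ∈ Finset.range n, c j k) / ENNReal.ofReal s + (n:ℝ≥0∞) * ENNReal.ofReal δ := by
            simp only [div_eq_mul_inv]
            rw [Finset.sum_add_distrib, ← Finset.sum_mul, Finset.sum_const, Finset.card_range,
              nsmul_eq_mul]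
        _ ≤ (A/M) / ENNReal.ofReal s + (n:ℝ≥0∞) * ENNReal.ofReal δ :=
            add_le_add_left (ENNReal.div_le_div_right hCk _) _
    rw [hT0, hTlast]
    calc ∑ j ∈ Finset.range n, f (T (j+1)) + f L + f 0
        ≤ ((A/M) / ENNReal.ofReal s + (n:ℝ≥0∞) * ENNReal.ofReal δ) + f L + f 0 :=
          add_le_add_left (add_le_add_left hmidle _) _
      _ = G + ((A/M) / ENNReal.ofReal s + (n:ℝ≥0∞) * ENNReal.ofReal δ) := by
          rw [hGdef]; ring
  have hs0 : ENNReal.ofReal s ≠ 0 := by simp [ENNReal.ofReal_eq_zero, not_le, hspos]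
  have hsT : ENNReal.ofReal s ≠ ∞ := ENNReal.ofReal_ne_top
  have hMcast0 : (M:ℝ≥0∞) ≠ 0 := Nat.cast_ne_zero.mpr hMn0
  have hMcastT : (M:ℝ≥0∞) ≠ ∞ := ENNReal.natCast_ne_top M
  have T1 : G * ENNReal.ofReal (Δ + s) ≤ ENNReal.ofReal (ηr/3) := by
    have hGR : G = ENNReal.ofReal G.toReal := (ENNReal.ofReal_toReal hG).symm
    rw [hGR, ← ENNReal.ofReal_mul ENNReal.toReal_nonneg]
    apply ENNReal.ofReal_le_ofReal
    have h6 : 6*L*G.toReal < n*ηr :=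
      (div_lt_iff₀ hηr).mp (lt_of_le_of_lt (le_max_right (2*L/ε) _) hn)
    nlinarith [ENNReal.toReal_nonneg (a := G), hsΔ, hnΔ, hΔpos, hnpos,
      mul_le_mul_of_nonneg_left hsΔ (ENNReal.toReal_nonneg (a := G))]
  have T2 : (A/M) / ENNReal.ofReal s * ENNReal.ofReal (Δ + s) ≤ A + ENNReal.ofReal (ηr/3) := by
    have e1 : (A/M) / ENNReal.ofReal s * ENNReal.ofReal s = A/M :=
      ENNReal.div_mul_cancel hs0 hsT
    have e2 : (A/M) / ENNReal.ofReal s * ENNReal.ofReal Δ = A := by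
      have hΔof : ENNReal.ofReal Δ = (M:ℝ≥0∞) * ENNReal.ofReal s := by
        rw [← hMs, ENNReal.ofReal_mul (Nat.cast_nonneg M), ENNReal.ofReal_natCast]
      rw [hΔof]
      calc (A/M) / ENNReal.ofReal s * ((M:ℝ≥0∞) * ENNReal.ofReal s)
          = (A/M) / ENNReal.ofReal s * ENNReal.ofReal s * (M:ℝ≥0∞) := by ring
        _ = A/M * M := by rw [e1]
        _ = A := ENNReal.div_mul_cancel hMcast0 hMcastT
    rw [ENNReal.ofReal_add hΔpos.le hspos.le, mul_add, e1, e2]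
    refine add_le_add_right ?_ A
    rw [ENNReal.div_le_iff_le_mul (Or.inl hMcast0) (Or.inl hMcastT)]
    have hAR : A = ENNReal.ofReal A.toReal := (ENNReal.ofReal_toReal hAtop).symm
    rw [hAR, ← ENNReal.ofReal_natCast M, ← ENNReal.ofReal_mul (by positivity)]
    apply ENNReal.ofReal_le_ofReal
    have h3 := (div_lt_iff₀ hηr).mp (lt_of_le_of_lt (le_max_left (3*A.toReal/ηr) 0) hM)
    nlinarith [ENNReal.toReal_nonneg (a := A)]
  have T3 : (n:ℝ≥0∞) * ENNReal.ofReal δ * ENNReal.ofReal (Δ + s) ≤ ENNReal.ofReal (ηr/3) := by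
    rw [← ENNReal.ofReal_natCast n, ← ENNReal.ofReal_mul (Nat.cast_nonneg n),
      ← ENNReal.ofReal_mul (by positivity)]
    apply ENNReal.ofReal_le_ofReal
    have hδeq : δ * (2*L+1) = ηr/3 := by rw [hδdef]; field_simp
    have h2L : (n:ℝ)*(Δ+s) ≤ 2*L := by
      nlinarith [mul_le_mul_of_nonneg_left hsΔ hnpos.le, hnΔ]
    nlinarith [mul_le_mul_of_nonneg_left h2L hδpos.le, hδeq, hδpos, hLpos]
  calc chainInt g (n+1) (γ ∘ T)
      ≤ (∑ j ∈ Finset.range (n+1), (f (T j) + f (T (j+1))) / 2) * ENNReal.ofReal (Δ + s) := step1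
    _ ≤ (∑ j ∈ Finset.range (n+2), f (T j)) * ENNReal.ofReal (Δ + s) := mul_le_mul_left step3 _
    _ ≤ (G + ((A/M) / ENNReal.ofReal s + (n:ℝ≥0∞) * ENNReal.ofReal δ)) * ENNReal.ofReal (Δ + s) :=
        mul_le_mul_left step4 _
    _ = G * ENNReal.ofReal (Δ + s) + (A/M) / ENNReal.ofReal s * ENNReal.ofReal (Δ + s)
        + (n:ℝ≥0∞) * ENNReal.ofReal δ * ENNReal.ofReal (Δ + s) := by ring
    _ ≤ ENNReal.ofReal (ηr/3) + (A + ENNReal.ofReal (ηr/3)) + ENNReal.ofReal (ηr/3) :=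
        add_le_add (add_le_add T1 T2) T3
    _ = A + (ENNReal.ofReal (ηr/3) + ENNReal.ofReal (ηr/3) + ENNReal.ofReal (ηr/3)) := by ring
    _ = A + ↑η := by
        rw [← ENNReal.ofReal_add (by positivity) (by positivity),
          ← ENNReal.ofReal_add (by positivity) (by positivity)]
        congr 1
        rw [show ηr/3 + ηr/3 + ηr/3 = ηr by ring]
        exact ENNReal.ofReal_coe_nnreal
end

section
/- Fuglede's lemma for chains: let g_j be a sequence of Borel functions converging in L^p(X,m) to g. Then there is a subsequence g_{j_k} such that, for every Borel representative g of the limit, lim_{k→∞} ∫_c |g_{j_k} − g| = 0 for Mod_p^ε-almost every chain c (i.e., the family of chains where this fails has (ε,p)-chain modulus zero). -/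
open scoped ENNReal

variable {X : Type*} [MetricSpace X]

open MeasureTheory

/-- A chain is encoded as a pair `(N, q)`, representing the points `q 0, …, q N`. -/
abbrev Chain (X : Type*) := ℕ × (ℕ → X)

/-- The `(ε,p)`-modulus of a family of chains `C`:
`inf { ∫ ρ^p dm : ρ Borel nonnegative, ∫_c ρ ≥ 1 for every ε-chain c ∈ C }`. -/
noncomputable def chainMod [MeasurableSpace X] (m : Measure X) (p ε : ℝ)
    (C : Set (Chain X)) : ℝ≥0∞ :=
  ⨅ (ρ : X → ℝ≥0∞) (_ : Measurable ρ ∧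
      ∀ c ∈ C, IsEpsChain ε c.1 c.2 → 1 ≤ chainInt ρ c.1 c.2),
    ∫⁻ x, ρ x ^ p ∂m

/-- Symmetric difference in `ℝ≥0∞`, playing the role of `|a - b|`. -/
noncomputable def ediff (a b : ℝ≥0∞) : ℝ≥0∞ := (a - b) + (b - a)

open Filter

section Helpers
variable {X : Type*} [MetricSpace X]

lemma chainInt_mono {f h : X → ℝ≥0∞} (hfh : ∀ x, f x ≤ h x) (N : ℕ) (q : ℕ → X) :
    chainInt f N q ≤ chainInt h N q := by
  refine Finset.sum_le_sum fun i _ => ?_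
  gcongr <;> exact hfh _

lemma chainInt_const_mul (a : ℝ≥0∞) (f : X → ℝ≥0∞) (N : ℕ) (q : ℕ → X) :
    chainInt (fun x => a * f x) N q = a * chainInt f N q := by
  rw [chainInt, chainInt, Finset.mul_sum]
  refine Finset.sum_congr rfl fun i _ => ?_
  rw [← mul_add, mul_div_assoc, mul_assoc]

lemma term_le_chainInt (f : X → ℝ≥0∞) {N : ℕ} (q : ℕ → X) {i : ℕ} (hi : i < N) :
    (f (q i) + f (q (i + 1))) / 2 * ENNReal.ofReal (dist (q i) (q (i + 1))) ≤ chainInt f N q :=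
  Finset.single_le_sum (f := fun i => (f (q i) + f (q (i + 1))) / 2 *
    ENNReal.ofReal (dist (q i) (q (i + 1)))) (fun _ _ => zero_le) (Finset.mem_range.2 hi)

lemma not_tendsto_zero {f : ℕ → ℝ≥0∞} (h : ¬ Tendsto f atTop (nhds 0)) :
    ∃ δ : ℝ≥0∞, δ ≠ 0 ∧ ∀ n, ∃ k ≥ n, δ < f k := by
  rw [ENNReal.tendsto_atTop_zero] at h
  push_neg at h
  obtain ⟨δ, hδ, h⟩ := h
  exact ⟨δ, hδ.ne', fun n => by obtain ⟨k, hk, h⟩ := h n; exact ⟨k, hk, h⟩⟩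

lemma eq_top_of_nat_mul_le {δ a : ℝ≥0∞} (hδ : δ ≠ 0)
    (h : ∀ n : ℕ, (n : ℝ≥0∞) * δ ≤ a) : a = ∞ := by
  rw [eq_top_iff, ← ENNReal.top_mul hδ, ← ENNReal.iSup_natCast, ENNReal.iSup_mul]
  exact iSup_le h

lemma ediff_triangle (a b c : ℝ≥0∞) : ediff a c ≤ ediff a b + ediff b c := by
  unfold ediff
  calc a - c + (c - a) ≤ (a - b + (b - c)) + (c - b + (b - a)) :=
        add_le_add tsub_le_tsub_add_tsub tsub_le_tsub_add_tsub
    _ = a - b + (b - a) + (b - c + (c - b)) := by ring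

lemma ediff_eq_zero {a b : ℝ≥0∞} : ediff a b = 0 ↔ a = b := by
  rw [ediff, add_eq_zero, tsub_eq_zero_iff_le, tsub_eq_zero_iff_le]
  exact ⟨fun h => le_antisymm h.1 h.2, fun h => ⟨h.le, h.ge⟩⟩

lemma ediff_comm (a b : ℝ≥0∞) : ediff a b = ediff b a := add_comm _ _

lemma rpow_add_le {a b : ℝ≥0∞} {p : ℝ} (hp : 0 ≤ p) :
    (a + b) ^ p ≤ 2 ^ p * (a ^ p + b ^ p) := by
  calc (a + b) ^ p ≤ (2 * max a b) ^ p := by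
        gcongr
        rw [two_mul]
        exact add_le_add (le_max_left _ _) (le_max_right _ _)
    _ = 2 ^ p * max a b ^ p := ENNReal.mul_rpow_of_nonneg _ _ hp
    _ ≤ 2 ^ p * (a ^ p + b ^ p) := by
        gcongr
        rcases max_cases a b with ⟨h, _⟩ | ⟨h, _⟩ <;> rw [h]
        exacts [le_add_right le_rfl, le_add_left le_rfl]

lemma measurable_ediff {f h : X → ℝ≥0∞} [MeasurableSpace X] (hf : Measurable f)
    (hh : Measurable h) : Measurable fun x => ediff (f x) (h x) :=
  (hf.sub hh).add (hh.sub hf)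

end Helpers

/-- Fuglede's lemma for chains: if `g_j` converges in `L^p`, then along a subsequence,
for every Borel representative `g'` of the limit, `∫_c |g_{j_k} - g'| → 0` for
`Mod_p^ε`-almost every chain. -/
theorem fuglede_for_chains [MeasurableSpace X] [BorelSpace X]
    (m : Measure X) (p ε : ℝ) (hp : 1 ≤ p) (hε : 0 < ε)
    (g : ℕ → X → ℝ≥0∞) (hmeas : ∀ j, Measurable (g j))
    (hconv : ∃ g₀ : X → ℝ≥0∞, Measurable g₀ ∧
      Filter.Tendsto (fun j => ∫⁻ x, ediff (g j x) (g₀ x) ^ p ∂m)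
        Filter.atTop (nhds 0)) :
    ∃ φ : ℕ → ℕ, StrictMono φ ∧
      ∀ g' : X → ℝ≥0∞, Measurable g' →
        Filter.Tendsto (fun j => ∫⁻ x, ediff (g j x) (g' x) ^ p ∂m)
          Filter.atTop (nhds 0) →
        chainMod m p ε {c : Chain X |
          ¬ Filter.Tendsto
              (fun k => chainInt (fun x => ediff (g (φ k) x) (g' x)) c.1 c.2)
              Filter.atTop (nhds 0)} = 0 := by
  obtain ⟨g₀, hg₀, hg₀conv⟩ := hconv
  have hp0 : (0:ℝ) < p := lt_of_lt_of_le one_pos hp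
  have hpne : p ≠ 0 := hp0.ne'
  set I : ℕ → ℝ≥0∞ := fun j => ∫⁻ x, ediff (g j x) (g₀ x) ^ p ∂m with hI
  set w : ℕ → ℝ≥0∞ := fun n => ((n : ℝ≥0∞) + 1) ^ p with hw
  have hwne0 : ∀ n, w n ≠ 0 := fun n =>
    (ENNReal.rpow_pos (lt_of_lt_of_le one_pos le_add_self) (by simp [ENNReal.add_ne_top])).ne'
  have hwnetop : ∀ n, w n ≠ ∞ := fun n =>
    ENNReal.rpow_ne_top_of_nonneg hp0.le (by simp [ENNReal.add_ne_top])
  -- extraction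
  have hev : ∀ n : ℕ, ∀ᶠ j in atTop, w n * I j ≤ 2⁻¹ ^ n := by
    intro n
    have hpos : (0:ℝ≥0∞) < 2⁻¹ ^ n / w n :=
      ENNReal.div_pos (pow_ne_zero _ (by simp)) (hwnetop n)
    obtain ⟨N0, hN0⟩ := (ENNReal.tendsto_atTop_zero.1 hg₀conv) _ hpos
    refine eventually_atTop.2 ⟨N0, fun j hj => ?_⟩
    calc w n * I j ≤ w n * (2⁻¹ ^ n / w n) := by gcongr; exact hN0 j hj
      _ = 2⁻¹ ^ n := ENNReal.mul_div_cancel (hwne0 n) (hwnetop n)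
  obtain ⟨φ, hφmono, hφ⟩ := extraction_forall_of_eventually hev
  refine ⟨φ, hφmono, fun g' hg' hg'conv => ?_⟩
  -- the limit representatives agree a.e.
  set D : X → ℝ≥0∞ := fun x => ediff (g₀ x) (g' x) with hD
  have hDmeas : Measurable D := measurable_ediff hg₀ hg'
  have hD0 : ∀ᵐ x ∂m, D x = 0 := by
    have hJ : (∫⁻ x, D x ^ p ∂m) = 0 := by
      have hle : ∀ j, (∫⁻ x, D x ^ p ∂m) ≤
          2 ^ p * ((∫⁻ x, ediff (g j x) (g₀ x) ^ p ∂m)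
            + ∫⁻ x, ediff (g j x) (g' x) ^ p ∂m) := by
        intro j
        have hpt : ∀ x, D x ^ p ≤
            2 ^ p * (ediff (g j x) (g₀ x) ^ p + ediff (g j x) (g' x) ^ p) := by
          intro x
          calc D x ^ p ≤ (ediff (g₀ x) (g j x) + ediff (g j x) (g' x)) ^ p := by
                gcongr
                exact ediff_triangle _ _ _
            _ ≤ 2 ^ p * (ediff (g₀ x) (g j x) ^ p + ediff (g j x) (g' x) ^ p) :=
                rpow_add_le hp0.le
            _ = 2 ^ p * (ediff (g j x) (g₀ x) ^ p + ediff (g j x) (g' x) ^ p) := by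
                rw [ediff_comm]
        calc (∫⁻ x, D x ^ p ∂m)
            ≤ ∫⁻ x, 2 ^ p * (ediff (g j x) (g₀ x) ^ p + ediff (g j x) (g' x) ^ p) ∂m :=
              lintegral_mono hpt
          _ = 2 ^ p * ((∫⁻ x, ediff (g j x) (g₀ x) ^ p ∂m)
              + ∫⁻ x, ediff (g j x) (g' x) ^ p ∂m) := by
              rw [lintegral_const_mul (f := fun x => ediff (g j x) (g₀ x) ^ p + ediff (g j x) (g' x) ^ p) _ (((measurable_ediff (hmeas j) hg₀).pow_const p).add
                ((measurable_ediff (hmeas j) hg').pow_const p)),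
                lintegral_add_left ((measurable_ediff (hmeas j) hg₀).pow_const p)]
      have htend : Tendsto (fun j => 2 ^ p * ((∫⁻ x, ediff (g j x) (g₀ x) ^ p ∂m)
          + ∫⁻ x, ediff (g j x) (g' x) ^ p ∂m)) atTop (nhds 0) := by
        have := (hg₀conv.add hg'conv)
        simpa using ENNReal.Tendsto.const_mul this
          (Or.inr (ENNReal.rpow_ne_top_of_nonneg hp0.le (by norm_num)))
      exact le_antisymm (ge_of_tendsto' htend hle) zero_le
    have := (lintegral_eq_zero_iff (hDmeas.pow_const p)).1 hJ
    filter_upwards [this] with x hx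
    simpa [ENNReal.rpow_eq_zero_iff_of_pos hp0] using hx
  -- main argument
  by_contra hC
  obtain ⟨K, hK⟩ := ENNReal.exists_inv_two_pow_lt hC
  set ρk : ℕ → X → ℝ≥0∞ := fun k x => ediff (g (φ k) x) (g₀ x) with hρk
  set S : X → ℝ≥0∞ := fun x => ∑' k, w (K + 1 + k) * ρk (K + 1 + k) x ^ p with hS
  set ρ : X → ℝ≥0∞ := fun x => ∞ * D x + S x ^ (1/p) with hρ
  have hρkmeas : ∀ k, Measurable (ρk k) := fun k => measurable_ediff (hmeas (φ k)) hg₀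
  have hSmeas : Measurable S :=
    Measurable.ennreal_tsum fun k => (measurable_const.mul ((hρkmeas _).pow_const p))
  have hρmeas : Measurable ρ :=
    (measurable_const.mul hDmeas).add (hSmeas.pow_const _)
  -- the integral bound
  have hint : (∫⁻ x, ρ x ^ p ∂m) ≤ 2⁻¹ ^ K := by
    have hae : (fun x => ρ x ^ p) =ᵐ[m] S := by
      filter_upwards [hD0] with x hx
      rw [hρ]
      simp only [hx, mul_zero, zero_add]
      rw [one_div, ENNReal.rpow_inv_rpow hpne]
    rw [lintegral_congr_ae hae, hS]
    beta_reduce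
    rw [lintegral_tsum (f := fun k x => w (K + 1 + k) * ρk (K + 1 + k) x ^ p) fun k =>
      ((measurable_const.mul ((hρkmeas _).pow_const p))).aemeasurable]
    have h1 : ∀ k : ℕ, (∫⁻ x, w (K + 1 + k) * ρk (K + 1 + k) x ^ p ∂m)
        ≤ 2⁻¹ ^ (K + 1 + k) := by
      intro k
      rw [lintegral_const_mul _ ((hρkmeas _).pow_const p)]
      exact hφ (K + 1 + k)
    calc (∑' k, ∫⁻ x, w (K + 1 + k) * ρk (K + 1 + k) x ^ p ∂m)
        ≤ ∑' k : ℕ, (2⁻¹ : ℝ≥0∞) ^ (K + 1 + k) := ENNReal.tsum_le_tsum h1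
      _ = 2⁻¹ ^ (K + 1) * ∑' k : ℕ, (2⁻¹ : ℝ≥0∞) ^ k := by
          rw [← ENNReal.tsum_mul_left]; congr 1; ext k; rw [pow_add]
      _ = 2⁻¹ ^ (K + 1) * 2 := by
          rw [ENNReal.tsum_geometric, ENNReal.one_sub_inv_two]
          norm_num
      _ = 2⁻¹ ^ K := by
          rw [pow_succ, mul_assoc, ENNReal.inv_mul_cancel two_ne_zero ENNReal.ofNat_ne_top,
            mul_one]
  -- chainInt ρ = ∞ on the bad set
  have hctop : ∀ c : Chain X, c ∈ {c : Chain X |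
      ¬ Filter.Tendsto (fun k => chainInt (fun x => ediff (g (φ k) x) (g' x)) c.1 c.2)
        Filter.atTop (nhds 0)} → chainInt ρ c.1 c.2 = ∞ := by
    rintro ⟨Nc, q⟩ hc
    simp only [Set.mem_setOf_eq] at hc
    by_cases hA : ∃ i < Nc, 0 < dist (q i) (q (i + 1)) ∧
        (D (q i) ≠ 0 ∨ D (q (i + 1)) ≠ 0)
    · obtain ⟨i, hi, hd, hN⟩ := hA
      have htop : (ρ (q i) + ρ (q (i + 1))) / 2 = ∞ := by
        have : ρ (q i) = ∞ ∨ ρ (q (i + 1)) = ∞ := by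
          rcases hN with h | h
          · exact Or.inl (by rw [hρ]; simp [ENNReal.top_mul h])
          · exact Or.inr (by rw [hρ]; simp [ENNReal.top_mul h])
        rcases this with h | h <;>
          rw [h] <;> simp [ENNReal.top_div_of_ne_top, ENNReal.add_eq_top]
      refine top_le_iff.1 ?_
      calc (∞ : ℝ≥0∞) = (ρ (q i) + ρ (q (i + 1))) / 2
            * ENNReal.ofReal (dist (q i) (q (i + 1))) := by
            rw [htop, ENNReal.top_mul (by simpa [ENNReal.ofReal_eq_zero, not_le] using hd)]
        _ ≤ chainInt ρ Nc q := term_le_chainInt ρ q hi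
    · push_neg at hA
      have hEq : ∀ k, chainInt (fun x => ediff (g (φ k) x) (g' x)) Nc q
          = chainInt (fun x => ρk k x) Nc q := by
        intro k
        refine Finset.sum_congr rfl fun i hi => ?_
        rcases le_or_gt (dist (q i) (q (i + 1))) 0 with hd | hd
        · have : dist (q i) (q (i + 1)) = 0 := le_antisymm hd dist_nonneg
          rw [this]; simp
        · obtain ⟨h1, h2⟩ := hA i (Finset.mem_range.1 hi) hd
          have e1 : g₀ (q i) = g' (q i) := ediff_eq_zero.1 (not_not.1 (by simpa using h1))
          have e2 : g₀ (q (i + 1)) = g' (q (i + 1)) :=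
            ediff_eq_zero.1 (not_not.1 (by simpa using h2))
          rw [hρk]
          simp only [← e1, ← e2]
      rw [show (fun k => chainInt (fun x => ediff (g (φ k) x) (g' x)) Nc q)
          = fun k => chainInt (fun x => ρk k x) Nc q from funext hEq] at hc
      obtain ⟨δ, hδ, hfreq⟩ := not_tendsto_zero hc
      refine eq_top_of_nat_mul_le hδ fun n => ?_
      obtain ⟨k, hk, hδk⟩ := hfreq (max n (K + 1))
      have hkK : K + 1 ≤ k := le_trans (le_max_right _ _) hk
      have hkn : n ≤ k := le_trans (le_max_left _ _) hk
      have hpt : ∀ x, ((k : ℝ≥0∞) + 1) * ρk k x ≤ ρ x := by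
        intro x
        have h1 : w k * ρk k x ^ p ≤ S x := by
          rw [hS]
          have := ENNReal.le_tsum (f := fun k' => w (K + 1 + k') * ρk (K + 1 + k') x ^ p)
            (k - (K + 1))
          rwa [Nat.add_sub_cancel' hkK] at this
        have h2 : (w k * ρk k x ^ p) ^ (1/p) = ((k : ℝ≥0∞) + 1) * ρk k x := by
          rw [one_div, ENNReal.mul_rpow_of_nonneg _ _ (by positivity), hw,
            ENNReal.rpow_rpow_inv hpne, ENNReal.rpow_rpow_inv hpne]
        calc ((k : ℝ≥0∞) + 1) * ρk k x = (w k * ρk k x ^ p) ^ (1/p) := h2.symm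
          _ ≤ S x ^ (1/p) := ENNReal.rpow_le_rpow h1 (by positivity)
          _ ≤ ρ x := le_add_self
      calc (n : ℝ≥0∞) * δ ≤ ((k : ℝ≥0∞) + 1) * chainInt (fun x => ρk k x) Nc q :=
            mul_le_mul' (le_trans (Nat.cast_le.2 hkn) le_self_add) hδk.le
        _ = chainInt (fun x => ((k : ℝ≥0∞) + 1) * ρk k x) Nc q :=
            (chainInt_const_mul _ _ _ _).symm
        _ ≤ chainInt ρ Nc q := chainInt_mono hpt Nc q
  -- conclude
  have hle : chainMod m p ε {c : Chain X |
      ¬ Filter.Tendsto (fun k => chainInt (fun x => ediff (g (φ k) x) (g' x)) c.1 c.2)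
        Filter.atTop (nhds 0)} ≤ 2⁻¹ ^ K := by
    refine le_trans (iInf₂_le ρ ⟨hρmeas, fun c hc _ => ?_⟩) hint
    rw [hctop c hc]
    exact le_top
  exact absurd hle (not_le.2 hK)
end

section
/- Chain distance functions are Lipschitz at scale ε: let g : X → [0,∞) be bounded, A ⊆ X, M > 0, and define u(x) := min{M, inf{u_0(α(c)) + ∫_c g : c is an ε-chain with ω(c) = x and α(c) ∈ A}} for a fixed function u_0 : A → [−M, M]. Then g is an ε-upper gradient of u, and u is Lipschitz with constant max{2M/ε, sup_X g}. -/
open scoped ENNReal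

variable {X : Type*} [MetricSpace X]

/-- The real-valued chain integral of `g : X → ℝ`. -/
noncomputable def chainIntR (g : X → ℝ) (N : ℕ) (q : ℕ → X) : ℝ :=
  ∑ i ∈ Finset.range N, (g (q i) + g (q (i + 1))) / 2 * dist (q i) (q (i + 1))

lemma chainIntR_nonneg {g : X → ℝ} (hg0 : ∀ x, 0 ≤ g x) (N : ℕ) (q : ℕ → X) :
    0 ≤ chainIntR g N q := by
  apply Finset.sum_nonneg
  intro i _
  have h1 := hg0 (q i)
  have h2 := hg0 (q (i + 1))
  have := dist_nonneg (x := q i) (y := q (i + 1))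
  apply mul_nonneg (by linarith) this

lemma isEpsChain_reverse {ε : ℝ} {N : ℕ} {q : ℕ → X} (hq : IsEpsChain ε N q) :
    IsEpsChain ε N (fun i => q (N - i)) := by
  intro i hi
  show dist (q (N - i)) (q (N - (i + 1))) ≤ ε
  have e1 : N - i = (N - (i + 1)) + 1 := by omega
  rw [e1, dist_comm]
  exact hq (N - (i + 1)) (by omega)

lemma chainIntR_reverse (g : X → ℝ) (N : ℕ) (q : ℕ → X) :
    chainIntR g N (fun i => q (N - i)) = chainIntR g N q := by
  unfold chainIntR
  rw [← Finset.sum_range_reflect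
      (fun i => (g (q i) + g (q (i + 1))) / 2 * dist (q i) (q (i + 1))) N]
  refine Finset.sum_congr rfl fun i hi => ?_
  have hi' := Finset.mem_range.mp hi
  have e1 : N - i = (N - 1 - i) + 1 := by omega
  have e2 : N - (i + 1) = N - 1 - i := by omega
  simp only [e1, e2]
  rw [dist_comm]
  ring

/-- Chain distance functions are Lipschitz at scale `ε`: for bounded `g ≥ 0`,
`A ⊆ X`, `u₀ : A → [-M, M]` and
`u(x) = min{M, inf{u₀(α(c)) + ∫_c g : c an ε-chain, ω(c) = x, α(c) ∈ A}}`
(the infimum being over a nonempty set), `g` is an `ε`-upper gradient of `u`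
and `u` is Lipschitz with constant `max{2M/ε, sup_X g}`. -/
theorem chain_distance_function_lipschitz (ε M C : ℝ) (hε : 0 < ε) (hM : 0 < M)
    (g : X → ℝ) (hg0 : ∀ x, 0 ≤ g x) (hgC : ∀ x, g x ≤ C)
    (A : Set X) (u₀ : X → ℝ) (hu₀ : ∀ a ∈ A, |u₀ a| ≤ M)
    (hconn : ∀ x : X, ∃ (N : ℕ) (q : ℕ → X), IsEpsChain ε N q ∧ q 0 ∈ A ∧ q N = x)
    (u : X → ℝ)
    (hu : ∀ x : X, u x = min M (sInf {v : ℝ | ∃ (N : ℕ) (q : ℕ → X),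
        IsEpsChain ε N q ∧ q 0 ∈ A ∧ q N = x ∧ v = u₀ (q 0) + chainIntR g N q})) :
    (∀ (N : ℕ) (q : ℕ → X), IsEpsChain ε N q →
        |u (q N) - u (q 0)| ≤ chainIntR g N q) ∧
    LipschitzWith (Real.toNNReal (max (2 * M / ε) C)) u := by
  classical
  set S : X → Set ℝ := fun x => {v : ℝ | ∃ (N : ℕ) (q : ℕ → X),
      IsEpsChain ε N q ∧ q 0 ∈ A ∧ q N = x ∧ v = u₀ (q 0) + chainIntR g N q} with hSdef
  have huS : ∀ x, u x = min M (sInf (S x)) := hu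
  have hSne : ∀ x, (S x).Nonempty := by
    intro x
    obtain ⟨N, q, hq, hA, hend⟩ := hconn x
    exact ⟨_, N, q, hq, hA, hend, rfl⟩
  have hSlb : ∀ x, ∀ v ∈ S x, -M ≤ v := by
    rintro x v ⟨N, q, hq, hA, hend, rfl⟩
    have h1 := (abs_le.mp (hu₀ (q 0) hA)).1
    have h2 := chainIntR_nonneg hg0 N q
    linarith
  have hSbdd : ∀ x, BddBelow (S x) := fun x => ⟨-M, fun v hv => hSlb x v hv⟩
  have hub : ∀ x, u x ≤ M := fun x => by rw [huS x]; exact min_le_left _ _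
  have hlb : ∀ x, -M ≤ u x := by
    intro x
    rw [huS x]
    exact le_min (by linarith) (le_csInf (hSne x) (hSlb x))
  have key : ∀ (N : ℕ) (q : ℕ → X), IsEpsChain ε N q →
      u (q N) ≤ u (q 0) + chainIntR g N q := by
    intro N q hq
    set I := chainIntR g N q with hIdef
    have hI : 0 ≤ I := chainIntR_nonneg hg0 N q
    rw [huS (q N), huS (q 0)]
    have h1 : sInf (S (q N)) ≤ sInf (S (q 0)) + I := by
      have hlow : ∀ v ∈ S (q 0), sInf (S (q N)) - I ≤ v := by
        rintro v ⟨K, c, hc, hA, hend, rfl⟩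
        set r : ℕ → X := fun i => if i < K then c i else q (i - K) with hrdef
        have hrle : ∀ i ≤ K, r i = c i := by
          intro i hi
          rcases lt_or_eq_of_le hi with h | h
          · simp [r, h]
          · subst h; simp [r, hend]
        have hrge : ∀ i, K ≤ i → r i = q (i - K) := by
          intro i hi
          simp [r, Nat.not_lt.mpr hi]
        have hrchain : IsEpsChain ε (K + N) r := by
          intro i hi
          rcases lt_or_ge i K with h | h
          · rw [hrle i h.le, hrle (i + 1) (by omega)]
            exact hc i h
          · rw [hrge i h, hrge (i + 1) (by omega)]
            have e : i + 1 - K = (i - K) + 1 := by omega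
            rw [e]
            exact hq (i - K) (by omega)
        have hint : chainIntR g (K + N) r = chainIntR g K c + chainIntR g N q := by
          unfold chainIntR
          rw [Finset.sum_range_add]
          congr 1
          · refine Finset.sum_congr rfl fun i hi => ?_
            have hi' := Finset.mem_range.mp hi
            rw [hrle i (by omega), hrle (i + 1) (by omega)]
          · refine Finset.sum_congr rfl fun i hi => ?_
            have e1 : K + i - K = i := by omega
            have e2 : K + i + 1 - K = i + 1 := by omega
            rw [hrge (K + i) (by omega), hrge (K + i + 1) (by omega), e1, e2]
        have hmem : u₀ (c 0) + chainIntR g K c + chainIntR g N q ∈ S (q N) := by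
          refine ⟨K + N, r, hrchain, ?_, ?_, ?_⟩
          · rw [hrle 0 (Nat.zero_le _)]; exact hA
          · rw [hrge (K + N) (by omega)]; simp
          · rw [hrle 0 (Nat.zero_le _), hint]; ring
        have hle := csInf_le (hSbdd (q N)) hmem
        linarith
      have := le_csInf (hSne (q 0)) hlow
      linarith
    calc min M (sInf (S (q N))) ≤ min (M + I) (sInf (S (q 0)) + I) :=
          le_min (le_trans (min_le_left _ _) (by linarith))
            (le_trans (min_le_right _ _) h1)
      _ = min M (sInf (S (q 0))) + I := min_add_add_right _ _ _
  have hUG : ∀ (N : ℕ) (q : ℕ → X), IsEpsChain ε N q →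
      |u (q N) - u (q 0)| ≤ chainIntR g N q := by
    intro N q hq
    have h1 := key N q hq
    have h2 := key N (fun i => q (N - i)) (isEpsChain_reverse hq)
    rw [chainIntR_reverse] at h2
    simp only [Nat.sub_self, Nat.sub_zero] at h2
    rw [abs_sub_le_iff]
    constructor <;> linarith
  refine ⟨hUG, ?_⟩
  apply LipschitzWith.of_dist_le_mul
  intro x y
  rw [Real.dist_eq]
  have hC0 : 0 ≤ C := le_trans (hg0 x) (hgC x)
  have hM2 : 0 ≤ 2 * M / ε := by positivity
  have hL : (Real.toNNReal (max (2 * M / ε) C) : ℝ) = max (2 * M / ε) C := by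
    rw [Real.coe_toNNReal]
    exact le_max_of_le_left hM2
  rw [hL]
  rcases le_or_gt (dist x y) ε with h | h
  · have hq : IsEpsChain ε 1 (fun i => if i = 0 then x else y) := by
      intro i hi
      interval_cases i
      simpa using h
    have hug := hUG 1 _ hq
    simp only [chainIntR, Finset.sum_range_one] at hug
    norm_num at hug
    have hcd : (g x + g y) / 2 * dist x y ≤ C * dist x y := by
      apply mul_le_mul_of_nonneg_right _ dist_nonneg
      have := hgC x
      have := hgC y
      linarith
    have hCm : C * dist x y ≤ max (2 * M / ε) C * dist x y :=
      mul_le_mul_of_nonneg_right (le_max_right _ _) dist_nonneg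
    rw [abs_sub_comm]
    linarith
  · have h1 : |u x - u y| ≤ 2 * M := by
      have := hub x; have := hlb x; have := hub y; have := hlb y
      rw [abs_le]
      constructor <;> linarith
    have h2 : 2 * M ≤ 2 * M / ε * dist x y := by
      rw [div_mul_eq_mul_div, le_div_iff₀ hε]
      nlinarith
    have h3 : 2 * M / ε * dist x y ≤ max (2 * M / ε) C * dist x y :=
      mul_le_mul_of_nonneg_right (le_max_left _ _) dist_nonneg
    linarith
end

section
/- Lower bound on chain integrals across a collar: let Ω ⊆ X be closed, x in the interior of Ω, y ∉ Ω, and let 0 < r < min{d(x, X∖Ω), d(y, Ω)}. Then for every ε < r and every ε-chain c from x to y, ∫_c χ_{B_r(Ω)∖Ω} ≥ r − 2ε, where B_r(Ω) is the open r-neighborhood of Ω. Consequently the chain width Chain-width_{x,y}(B_r(Ω)∖Ω) := lim_{ε→0} inf over ε-chains c from x to y of ∫_c χ_{B_r(Ω)∖Ω} is at least r. -/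
open scoped ENNReal

variable {X : Type*} [MetricSpace X]

/-- Lower bound on chain integrals across a collar: for `Ω` closed, `x` in the
interior of `Ω`, `y ∉ Ω` and `0 < r < min{d(x, X∖Ω), d(y, Ω)}`, every `ε`-chain
from `x` to `y` with `ε < r` satisfies `∫_c χ_{B_r(Ω)∖Ω} ≥ r - 2ε`; consequently
the chain width of `B_r(Ω)∖Ω` between `x` and `y` is at least `r`. -/
theorem chain_width_collar (Ω : Set X) (hΩ : IsClosed Ω) (x y : X)
    (hx : x ∈ interior Ω) (hy : y ∉ Ω) (r : ℝ) (hr : 0 < r)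
    (hrx : r < Metric.infDist x Ωᶜ) (hry : r < Metric.infDist y Ω) :
    (∀ ε : ℝ, 0 < ε → ε < r →
      ∀ (N : ℕ) (q : ℕ → X), IsEpsChain ε N q → q 0 = x → q N = y →
        ENNReal.ofReal (r - 2 * ε) ≤
          chainInt (Set.indicator ({z : X | Metric.infDist z Ω < r} \ Ω) fun _ => 1)
            N q) ∧
    ENNReal.ofReal r ≤
      ⨆ (ε : ℝ) (_ : 0 < ε),
        ⨅ (c : ℕ × (ℕ → X))
          (_ : IsEpsChain ε c.1 c.2 ∧ c.2 0 = x ∧ c.2 c.1 = y),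
          chainInt (Set.indicator ({z : X | Metric.infDist z Ω < r} \ Ω) fun _ => 1)
            c.1 c.2 := by
  have hxΩ : x ∈ Ω := interior_subset hx
  set A : Set X := {z : X | Metric.infDist z Ω < r} \ Ω with hA
  set g : X → ℝ≥0∞ := Set.indicator A (fun _ => 1) with hg
  have hlip : ∀ a b : X, Metric.infDist a Ω - Metric.infDist b Ω ≤ dist a b := by
    intro a b
    have := Metric.infDist_le_infDist_add_dist (x := a) (y := b) (s := Ω)
    linarith
  have key : ∀ ε : ℝ, 0 < ε → ε < r →
      ∀ (N : ℕ) (q : ℕ → X), IsEpsChain ε N q → q 0 = x → q N = y →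
        ENNReal.ofReal (r - 2 * ε) ≤ chainInt g N q := by
    intro ε hε hεr N q hchain h0 hN
    classical
    set f : ℕ → ℝ := fun i => Metric.infDist (q i) Ω with hfdef
    have hf0 : f 0 = 0 := by
      simp [hfdef, h0, Metric.infDist_zero_of_mem hxΩ]
    have hfN : r < f N := by simpa [hfdef, hN] using hry
    -- b : first index with r ≤ f b
    have hexb : ∃ i, r ≤ f i := ⟨N, hfN.le⟩
    set b := Nat.find hexb with hb
    have hfb : r ≤ f b := Nat.find_spec hexb
    have hlt : ∀ i < b, f i < r := fun i hi => lt_of_not_ge (Nat.find_min hexb hi)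
    have hbN : b ≤ N := Nat.find_le hfN.le
    have hb0 : 0 < b := by
      rcases Nat.eq_zero_or_pos b with h | h
      · exfalso; rw [h] at hfb; rw [hf0] at hfb; linarith
      · exact h
    -- a : greatest index ≤ b-1 with q a ∈ Ω
    set a := Nat.findGreatest (fun i => q i ∈ Ω) (b - 1) with ha
    have haΩ : q a ∈ Ω :=
      Nat.findGreatest_spec (P := fun i => q i ∈ Ω) (Nat.zero_le _) (show q 0 ∈ Ω by rw [h0]; exact hxΩ)
    have hab : a ≤ b - 1 := Nat.findGreatest_le _
    have hnot : ∀ i, a < i → i ≤ b - 1 → q i ∉ Ω := fun i h1 h2 =>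
      Nat.findGreatest_is_greatest h1 h2
    have hfa : f a = 0 := Metric.infDist_zero_of_mem haΩ
    have hab' : a + 1 ≤ b - 1 := by
      rcases Nat.lt_or_ge (a + 1) (b - 1) with h | h
      · exact h.le
      · -- a + 1 ≥ b - 1 ; since a ≤ b-1, either a+1 = b-1 (ok) or a = b-1
        rcases Nat.eq_or_lt_of_le hab with heq | hlt'
        · -- a = b - 1 : then dist (q a) (q b) ≤ ε but f a = 0, f b ≥ r
          exfalso
          have hstep : dist (q a) (q (a + 1)) ≤ ε := by
            apply hchain
            omega
          have : f b - f a ≤ dist (q b) (q a) := hlip _ _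
          rw [dist_comm] at this
          have hsucc : a + 1 = b := by omega
          rw [hsucc] at hstep
          rw [hfa] at this
          linarith
        · omega
    have habN : a + 1 < N := by omega
    -- all points q i for a+1 ≤ i ≤ b-1 are in A
    have hmemA : ∀ i, a + 1 ≤ i → i ≤ b - 1 → q i ∈ A := by
      intro i h1 h2
      constructor
      · exact hlt i (by omega)
      · exact hnot i (by omega) h2
    -- lower bound the sum by the segment Ico (a+1) (b-1)
    have hsub : Finset.Ico (a + 1) (b - 1) ⊆ Finset.range N := by
      intro i hi
      simp only [Finset.mem_Ico] at hi
      simp only [Finset.mem_range]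
      omega
    have hstep1 : (∑ i ∈ Finset.Ico (a + 1) (b - 1),
        (g (q i) + g (q (i + 1))) / 2 * ENNReal.ofReal (dist (q i) (q (i + 1))))
        ≤ chainInt g N q := by
      unfold chainInt
      exact Finset.sum_le_sum_of_subset hsub
    have hterm : ∀ i ∈ Finset.Ico (a + 1) (b - 1),
        (g (q i) + g (q (i + 1))) / 2 * ENNReal.ofReal (dist (q i) (q (i + 1)))
          = ENNReal.ofReal (dist (q i) (q (i + 1))) := by
      intro i hi
      simp only [Finset.mem_Ico] at hi
      have h1 : g (q i) = 1 := Set.indicator_of_mem (hmemA i hi.1 (by omega)) _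
      have h2 : g (q (i + 1)) = 1 :=
        Set.indicator_of_mem (hmemA (i + 1) (by omega) (by omega)) _
      rw [h1, h2, one_add_one_eq_two,
        ENNReal.div_self two_ne_zero ENNReal.ofNat_ne_top, one_mul]
    rw [Finset.sum_congr rfl hterm] at hstep1
    refine le_trans ?_ hstep1
    -- sum of distances ≥ f (b-1) - f (a+1) ≥ r - 2ε
    have htele : f (b - 1) - f (a + 1) ≤
        ∑ i ∈ Finset.Ico (a + 1) (b - 1), dist (q i) (q (i + 1)) := by
      have : ∀ m n : ℕ, m ≤ n →
          f n - f m ≤ ∑ i ∈ Finset.Ico m n, dist (q i) (q (i + 1)) := by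
        intro m n hmn
        induction n with
        | zero => simp [Nat.le_zero.mp hmn]
        | succ k ih =>
          rcases Nat.eq_or_lt_of_le hmn with heq | hlt'
          · simp [← heq]
          · have hmk : m ≤ k := by omega
            rw [Finset.sum_Ico_succ_top hmk]
            have h1 := ih hmk
            have h2 : f (k + 1) - f k ≤ dist (q k) (q (k + 1)) := by
              have := hlip (q (k + 1)) (q k)
              rw [dist_comm] at this
              exact this
            linarith
      exact this _ _ hab'
    have hfb1 : r - ε ≤ f (b - 1) := by
      have hstep : dist (q (b - 1)) (q b) ≤ ε := by
        have := hchain (b - 1) (by omega)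
        have heq : b - 1 + 1 = b := by omega
        rwa [heq] at this
      have : f b - f (b - 1) ≤ dist (q b) (q (b - 1)) := hlip _ _
      rw [dist_comm] at this
      linarith
    have hfa1 : f (a + 1) ≤ ε := by
      have hstep : dist (q a) (q (a + 1)) ≤ ε := hchain a (by omega)
      have : f (a + 1) - f a ≤ dist (q (a + 1)) (q a) := hlip _ _
      rw [dist_comm] at this
      linarith
    calc ENNReal.ofReal (r - 2 * ε)
        ≤ ENNReal.ofReal (∑ i ∈ Finset.Ico (a + 1) (b - 1), dist (q i) (q (i + 1))) := by
          apply ENNReal.ofReal_le_ofReal; linarith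
      _ = ∑ i ∈ Finset.Ico (a + 1) (b - 1), ENNReal.ofReal (dist (q i) (q (i + 1))) :=
          ENNReal.ofReal_sum_of_nonneg (fun i _ => dist_nonneg)
      _ ≤ _ := le_refl _
  refine ⟨key, ?_⟩
  apply le_of_forall_lt
  intro c hc
  have hct : c < ⊤ := hc.trans ENNReal.ofReal_lt_top
  set t := c.toReal with htdef
  have ht0 : 0 ≤ t := ENNReal.toReal_nonneg
  have htr : t < r := by
    have := (ENNReal.toReal_lt_toReal hct.ne ENNReal.ofReal_ne_top).mpr hc
    rwa [ENNReal.toReal_ofReal hr.le] at this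
  set ε : ℝ := (r - t) / 3 with hεdef
  have hε : 0 < ε := by linarith
  have hεr : ε < r := by nlinarith
  have hclt : c < ENNReal.ofReal (r - 2 * ε) := by
    have hc' : c = ENNReal.ofReal t := (ENNReal.ofReal_toReal hct.ne).symm
    rw [hc']
    rw [ENNReal.ofReal_lt_ofReal_iff (by nlinarith)]
    nlinarith
  refine hclt.trans_le (le_trans ?_ (le_iSup₂ (f := fun ε (_ : (0:ℝ) < ε) =>
      ⨅ (c : ℕ × (ℕ → X))
        (_ : IsEpsChain ε c.1 c.2 ∧ c.2 0 = x ∧ c.2 c.1 = y),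
        chainInt g c.1 c.2) ε hε))
  refine le_iInf₂ fun c' h' => ?_
  exact key ε hε hεr c'.1 c'.2 h'.1 h'.2.1 h'.2.2
end

section
/- In a doubling metric measure space, the total mass of the truncated Riesz measure satisfies m_{x,y}^L(X) ≤ 8·C_D·L·d(x,y) for every pair of distinct points x, y and every L ≥ 1, where C_D is the doubling constant. -/
open scoped ENNReal
open MeasureTheory Metric

lemma riesz_ball_bound {X : Type*} [MetricSpace X]
    [MeasurableSpace X] [BorelSpace X] (m : Measure X) (CD : ℝ≥0∞)
    (hdoub : ∀ (z : X) (r : ℝ), 0 < r → m (ball z (2 * r)) ≤ CD * m (ball z r))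
    (hfin : ∀ (z : X) (r : ℝ), 0 < r → m (ball z r) < ∞)
    (hpos : ∀ (z : X) (r : ℝ), 0 < r → 0 < m (ball z r))
    (x : X) (R : ℝ) (hR : 0 < R) :
    ∫⁻ z in ball x R, ENNReal.ofReal (dist x z) / m (ball x (dist x z)) ∂m
      ≤ 2 * CD * ENNReal.ofReal R := by
  set f : X → ℝ≥0∞ := fun z => ENNReal.ofReal (dist x z) / m (ball x (dist x z)) with hf
  set A : ℕ → Set X := fun k => {z | R / 2 ^ (k + 1) ≤ dist x z ∧ dist x z < R / 2 ^ k}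
    with hA
  have hcover : ball x R ⊆ {x} ∪ ⋃ k, A k := by
    intro z hz
    rcases eq_or_ne z x with rfl | hzx
    · exact Or.inl rfl
    right
    have hdz : 0 < dist x z := dist_pos.2 (Ne.symm hzx)
    have hzR : dist x z < R := by simpa [dist_comm] using mem_ball.1 hz
    have hex : ∃ n : ℕ, R / 2 ^ (n + 1) ≤ dist x z := by
      obtain ⟨n, hn⟩ := pow_unbounded_of_one_lt (R / dist x z) (by norm_num : (1:ℝ) < 2)
      refine ⟨n, ?_⟩
      have h1 : R < dist x z * 2 ^ n := by
        rw [div_lt_iff₀ hdz] at hn; linarith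
      have h2 : (2:ℝ) ^ n ≤ 2 ^ (n + 1) :=
        pow_le_pow_right₀ (by norm_num) (Nat.le_succ n)
      rw [div_le_iff₀ (by positivity)]
      nlinarith
    refine Set.mem_iUnion.2 ⟨Nat.find hex, Nat.find_spec hex, ?_⟩
    rcases Nat.eq_zero_or_pos (Nat.find hex) with h0 | h0
    · rw [h0]; simpa using hzR
    · have hmin := Nat.find_min hex (Nat.sub_lt h0 one_pos)
      push_neg at hmin
      have heq : Nat.find hex - 1 + 1 = Nat.find hex := Nat.succ_pred_eq_of_pos h0
      rwa [heq] at hmin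
  have hfx : f x = 0 := by simp [hf]
  have key : ∀ k : ℕ, ∫⁻ z in A k, f z ∂m ≤ CD * ENNReal.ofReal (R / 2 ^ k) := by
    intro k
    have hr : (0:ℝ) < R / 2 ^ (k + 1) := by positivity
    set M := m (ball x (R / 2 ^ (k + 1))) with hM
    set B := ENNReal.ofReal (R / 2 ^ k) / M with hB
    have hb : ∀ z ∈ A k, f z ≤ B := by
      intro z hz
      exact ENNReal.div_le_div (ENNReal.ofReal_le_ofReal hz.2.le)
        (measure_mono (ball_subset_ball hz.1))
    have h2r : 2 * (R / 2 ^ (k + 1)) = R / 2 ^ k := by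
      rw [pow_succ]; field_simp
    calc ∫⁻ z in A k, f z ∂m ≤ ∫⁻ _ in A k, B ∂m := setLIntegral_mono measurable_const hb
      _ = B * m (A k) := by rw [setLIntegral_const]
      _ ≤ B * (CD * M) := by
          gcongr
          calc m (A k) ≤ m (ball x (R / 2 ^ k)) := by
                refine measure_mono fun z hz => ?_
                rw [mem_ball, dist_comm]
                exact hz.2
            _ = m (ball x (2 * (R / 2 ^ (k + 1)))) := by rw [h2r]
            _ ≤ CD * M := hdoub x _ hr
      _ = CD * ENNReal.ofReal (R / 2 ^ k) := by
          rw [hB, mul_left_comm,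
            ENNReal.div_mul_cancel (hpos x _ hr).ne' (hfin x _ hr).ne]
  have hsum : ∑' k : ℕ, ENNReal.ofReal (R / 2 ^ k) = ENNReal.ofReal (2 * R) := by
    have heq : ∀ k : ℕ, R / 2 ^ k = R * (1 / 2 : ℝ) ^ k := by
      intro k; rw [one_div, inv_pow, div_eq_mul_inv]
    have hsummable : Summable fun k : ℕ => R / 2 ^ k :=
      (summable_geometric_two.mul_left R).congr fun k => (heq k).symm
    rw [← ENNReal.ofReal_tsum_of_nonneg (fun k => by positivity) hsummable]
    congr 1
    calc ∑' k : ℕ, R / 2 ^ k = ∑' k : ℕ, R * (1 / 2 : ℝ) ^ k := by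
          exact tsum_congr heq
      _ = R * 2 := by rw [tsum_mul_left, tsum_geometric_two]
      _ = 2 * R := by ring
  calc ∫⁻ z in ball x R, f z ∂m
      ≤ ∫⁻ z in ({x} ∪ ⋃ k, A k), f z ∂m := lintegral_mono_set hcover
    _ ≤ (∫⁻ z in ({x} : Set X), f z ∂m) + ∫⁻ z in (⋃ k, A k), f z ∂m :=
        lintegral_union_le _ _ _
    _ ≤ 0 + ∑' k : ℕ, ∫⁻ z in A k, f z ∂m := by
        refine add_le_add ?_ (lintegral_iUnion_le _ _)
        rw [lintegral_singleton, hfx, zero_mul]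
    _ ≤ 0 + ∑' k : ℕ, CD * ENNReal.ofReal (R / 2 ^ k) := by
        gcongr with k
        exact key k
    _ = CD * ENNReal.ofReal (2 * R) := by rw [zero_add, ENNReal.tsum_mul_left, hsum]
    _ = 2 * CD * ENNReal.ofReal R := by
        rw [ENNReal.ofReal_mul (by norm_num : (0:ℝ) ≤ 2)]
        simp [mul_comm, mul_left_comm, ENNReal.ofReal_ofNat]


/-- In a doubling metric measure space, the total mass of the truncated Riesz
measure `m_{x,y}^L` is at most `8·C_D·L·d(x,y)`.  The density is the truncated
Riesz potential with poles `x, y`, set equal to `0` at `x` and `y`. -/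
theorem riesz_measure_total_mass_bound {X : Type*} [MetricSpace X]
    [MeasurableSpace X] [BorelSpace X] (m : Measure X) (CD : ℝ≥0∞)
    (hdoub : ∀ (z : X) (r : ℝ), 0 < r → m (ball z (2 * r)) ≤ CD * m (ball z r))
    (hfin : ∀ (z : X) (r : ℝ), 0 < r → m (ball z r) < ∞)
    (hpos : ∀ (z : X) (r : ℝ), 0 < r → 0 < m (ball z r))
    (x y : X) (hxy : x ≠ y) (L : ℝ) (hL : 1 ≤ L) :
    (∫⁻ z, Set.indicator ({x, y}ᶜ : Set X)
        (Set.indicator (ball x (L * dist x y) ∪ ball y (L * dist x y))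
          (fun z => ENNReal.ofReal (dist x z) / m (ball x (dist x z)) +
                    ENNReal.ofReal (dist y z) / m (ball y (dist y z)))) z ∂m)
      ≤ 8 * CD * ENNReal.ofReal (L * dist x y) := by
  set R := L * dist x y with hRdef
  have hdxy : 0 < dist x y := dist_pos.2 hxy
  have hR : 0 < R := by positivity
  have hdR : dist x y ≤ R := le_mul_of_one_le_left hdxy.le hL
  set U : Set X := ball x R ∪ ball y R with hU
  have hUmeas : MeasurableSet U := measurableSet_ball.union measurableSet_ball
  have hmeas : ∀ p : X, Measurable fun z => ENNReal.ofReal (dist p z) / m (ball p (dist p z)) := by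
    intro p
    have h1 : Measurable fun z : X => dist p z := (continuous_const.dist continuous_id).measurable
    have h2 : Monotone fun r : ℝ => m (ball p r) := fun a b hab => measure_mono (ball_subset_ball hab)
    exact (ENNReal.measurable_ofReal.comp h1).div (h2.measurable.comp h1)
  have hUx : U ⊆ ball x (2 * R) := by
    refine Set.union_subset (ball_subset_ball (by linarith)) (ball_subset_ball' ?_)
    rw [dist_comm]; linarith
  have hUy : U ⊆ ball y (2 * R) := by
    refine Set.union_subset (ball_subset_ball' ?_) (ball_subset_ball (by linarith))
    linarith
  calc (∫⁻ z, Set.indicator ({x, y}ᶜ : Set X)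
        (Set.indicator U
          (fun z => ENNReal.ofReal (dist x z) / m (ball x (dist x z)) +
                    ENNReal.ofReal (dist y z) / m (ball y (dist y z)))) z ∂m)
      ≤ ∫⁻ z, Set.indicator U
          (fun z => ENNReal.ofReal (dist x z) / m (ball x (dist x z)) +
                    ENNReal.ofReal (dist y z) / m (ball y (dist y z))) z ∂m :=
        lintegral_mono fun z => Set.indicator_le_self _ _ z
    _ = ∫⁻ z in U, (ENNReal.ofReal (dist x z) / m (ball x (dist x z)) +
                    ENNReal.ofReal (dist y z) / m (ball y (dist y z))) ∂m := by
        exact lintegral_indicator hUmeas _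
    _ = (∫⁻ z in U, ENNReal.ofReal (dist x z) / m (ball x (dist x z)) ∂m) +
        ∫⁻ z in U, ENNReal.ofReal (dist y z) / m (ball y (dist y z)) ∂m :=
        lintegral_add_left ((hmeas x)) _
    _ ≤ (∫⁻ z in ball x (2 * R), ENNReal.ofReal (dist x z) / m (ball x (dist x z)) ∂m) +
        ∫⁻ z in ball y (2 * R), ENNReal.ofReal (dist y z) / m (ball y (dist y z)) ∂m :=
        add_le_add (lintegral_mono_set hUx) (lintegral_mono_set hUy)
    _ ≤ 2 * CD * ENNReal.ofReal (2 * R) + 2 * CD * ENNReal.ofReal (2 * R) :=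
        add_le_add (riesz_ball_bound m CD hdoub hfin hpos x (2 * R) (by linarith))
          (riesz_ball_bound m CD hdoub hfin hpos y (2 * R) (by linarith))
    _ = 8 * CD * ENNReal.ofReal R := by
        rw [ENNReal.ofReal_mul (by norm_num : (0:ℝ) ≤ 2)]
        have : (ENNReal.ofReal 2) = 2 := by simp
        rw [this]; ring
end
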